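/- (Lemma 9.2 of the paper, linear-algebra version.) Let 0 → V → F → L → 0 be a short exact sequence of finite-dimensional vector spaces (or vector bundles on a scheme) with L of dimension (rank) 1. Dualizing and tensoring with V ⊗ L gives an exact sequence 0 → V → F* ⊗ V ⊗ L → V* ⊗ V ⊗ L → 0. Let ψ : L → V* ⊗ V ⊗ L be the map t ↦ Id_V ⊗ t. Then there exists a canonical injective map φ : F → F* ⊗ V ⊗ L making the diagram commute: the identity on V, φ in the middle, and ψ on the right, provided the right square is taken with −π : F → L (the negative of the original projection). -/
import Mathlib


open TensorProduct

/-- If `v ≠ 0` then `v ⊗ t = 0` implies `t = 0`, over a field. -/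
lemma aux_tmul_eq_zero
    (K V L : Type*) [Field K]
    [AddCommGroup V] [Module K V] [AddCommGroup L] [Module K L]
    (v : V) (t : L) (hv : v ≠ 0) (h : v ⊗ₜ[K] t = 0) : t = 0 := by
  have hne : ¬ (∀ f : Module.Dual K V, f v = 0) := by
    rw [Module.forall_dual_apply_eq_zero_iff]; exact hv
  push_neg at hne
  obtain ⟨f, hf⟩ := hne
  have := congrArg (fun x => (TensorProduct.lid K L) ((LinearMap.rTensor L f) x)) h
  simp only [LinearMap.rTensor_tmul, TensorProduct.lid_tmul, map_zero] at this
  have : f v • t = 0 := this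
  rcases smul_eq_zero.mp this with h1 | h2
  · exact absurd h1 hf
  · exact h2

/-- Lemma 9.2 (linear-algebra version): for an exact sequence 0 → V → F → L → 0 with
L a line, identifying F* ⊗ V ⊗ L ≅ Hom(F, V ⊗ L) and V* ⊗ V ⊗ L ≅ Hom(V, V ⊗ L),
there is a canonical injection φ : F → Hom(F, V ⊗ L) with φ ∘ i = (v ↦ (g ↦ v ⊗ π g))
and (restriction to V) ∘ φ = ψ ∘ (−π), i.e. φ g (i v) = −(v ⊗ π g). -/
theorem canonical_injection_extension_line
    (K V F L : Type*) [Field K]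
    [AddCommGroup V] [Module K V] [AddCommGroup F] [Module K F]
    [AddCommGroup L] [Module K L]
    [FiniteDimensional K V] [FiniteDimensional K F] [FiniteDimensional K L]
    [Nontrivial V]
    (i : V →ₗ[K] F) (π : F →ₗ[K] L)
    (hi : Function.Injective i) (hπ : Function.Surjective π)
    (hexact : Function.Exact i π)
    (hL : Module.finrank K L = 1) :
    ∃ φ : F →ₗ[K] (F →ₗ[K] (V ⊗[K] L)),
      Function.Injective φ ∧
      (∀ (v : V) (g : F), φ (i v) g = v ⊗ₜ[K] (π g)) ∧
      (∀ (g : F) (v : V), φ g (i v) = - (v ⊗ₜ[K] (π g))) := by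
  -- choose a retraction r : F → V with r ∘ i = id
  obtain ⟨r, hr⟩ := i.exists_leftInverse_of_injective (LinearMap.ker_eq_bot.mpr hi)
  have hri : ∀ v : V, r (i v) = v := fun v => by
    have := congrArg (fun m => m v) hr; simpa using this
  -- π ∘ i = 0
  have hπi : ∀ v : V, π (i v) = 0 := fun v =>
    hexact.apply_apply_eq_zero v
  -- the bilinear map A f g = r f ⊗ π g
  set A : F →ₗ[K] F →ₗ[K] (V ⊗[K] L) :=
    (((TensorProduct.mk K V L).comp r).compl₂ π) with hA
  have hAapp : ∀ f g : F, A f g = (r f) ⊗ₜ[K] (π g) := fun f g => rfl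
  refine ⟨A - A.flip, ?_, ?_, ?_⟩
  · -- injectivity
    rw [injective_iff_map_eq_zero]
    intro f hf
    have hfg : ∀ g : F, (r f) ⊗ₜ[K] (π g) - (r g) ⊗ₜ[K] (π f) = 0 := by
      intro g
      have := congrArg (fun m => m g) hf
      simpa [hAapp] using this
    -- first, π f = 0
    obtain ⟨v, hv⟩ := exists_ne (0 : V)
    have h1 := hfg (i v)
    rw [hπi v, hri v, TensorProduct.tmul_zero, zero_sub, neg_eq_zero] at h1
    have hπf : π f = 0 := aux_tmul_eq_zero K V L v (π f) hv h1
    -- then r f = 0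
    have hLnt : Nontrivial L := by
      apply Module.nontrivial_of_finrank_pos (R := K); omega
    obtain ⟨t, ht⟩ := exists_ne (0 : L)
    obtain ⟨g, hg⟩ := hπ t
    have h2 := hfg g
    rw [hπf, TensorProduct.tmul_zero, sub_zero, hg] at h2
    have hrf : r f = 0 := by
      by_contra hrf
      exact ht (aux_tmul_eq_zero K V L (r f) t hrf h2)
    -- f ∈ range i
    obtain ⟨w, hw⟩ := (hexact f).mp hπf
    rw [← hw, hri w] at hrf
    rw [← hw, hrf, map_zero]
  · intro v g
    simp [hAapp, hπi v, hri v]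
  · intro g v
    simp [hAapp, hπi v, hri v]
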